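/- Let μ be a positive measure on ℝ^n absolutely continuous with respect to Lebesgue measure, Q a cube with 0 < μ(Q) < ∞, and f a nonnegative μ-integrable function on Q satisfying Ω_μ(f; Q) ≤ ε·f_{Q,μ} for some 0 < ε < 2. Let ε < λ < 2 and let s ≥ 0 be any number such that μ{x ∈ Q : f(x) > s} < (1 − λ/2)·μ(Q). Then Ω_μ(f; Q) ≤ (ελ/(λ − ε))·s. -/

import Mathlib

open MeasureTheory

/-- A closed axis-parallel cube of positive side length in `ℝⁿ`. -/
def IsCube {n : ℕ} (Q : Set (Fin n → ℝ)) : Prop :=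
  ∃ (a : Fin n → ℝ) (h : ℝ), 0 < h ∧ Q = Set.Icc a (fun i => a i + h)

/-- The `μ`-average `f_{Q,μ} = (1/μ(Q)) ∫_Q f dμ`. -/
noncomputable def muAvg {n : ℕ} (μ : Measure (Fin n → ℝ)) (Q : Set (Fin n → ℝ))
    (f : (Fin n → ℝ) → ℝ) : ℝ :=
  (∫ x in Q, f x ∂μ) / (μ Q).toReal

/-- The mean oscillation `Ω_μ(f;Q) = (1/μ(Q)) ∫_Q |f − f_{Q,μ}| dμ`. -/
noncomputable def muOsc {n : ℕ} (μ : Measure (Fin n → ℝ)) (Q : Set (Fin n → ℝ))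
    (f : (Fin n → ℝ) → ℝ) : ℝ :=
  (∫ x in Q, |f x - muAvg μ Q f| ∂μ) / (μ Q).toReal

open Set

/-!
Write `A` for the average of `f`. Since `f - A` has mean zero, the mean oscillation equals twice
the mean of `(A - f)⁺`, and `(A - f)⁺ ≥ A - s` on `{f ≤ s}`, a set of relative measure
greater than `λ/2`. Hence `Ω ≥ λ (A - s)`, which together with `Ω ≤ ε A` gives
`A ≤ λ s / (λ - ε)` and then `Ω ≤ ε A ≤ ε λ s / (λ - ε)`.
-/

namespace MeasureTheory

variable {α : Type*} [MeasurableSpace α] {μ : Measure α} [IsFiniteMeasure μ] {f : α → ℝ}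

theorem integral_abs_sub_average (hf : Integrable f μ) :
    ∫ x, |f x - ⨍ y, f y ∂μ| ∂μ = 2 * ∫ x, max (⨍ y, f y ∂μ - f x) 0 ∂μ := by
  set A := ⨍ y, f y ∂μ
  have hpointwise : ∀ x, |f x - A| = (f x - A) + 2 * max (A - f x) 0 := fun x => by
    rcases le_total (f x) A with h | h
    · rw [abs_of_nonpos (sub_nonpos.2 h), max_eq_left (sub_nonneg.2 h)]; ring
    · rw [abs_of_nonneg (sub_nonneg.2 h), max_eq_right (sub_nonpos.2 h)]; ring
  have hcentered : Integrable (fun x => f x - A) μ := hf.sub (integrable_const A)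
  have hnegPart : Integrable (fun x => 2 * max (A - f x) 0) μ :=
    ((integrable_const A).sub hf).pos_part.const_mul 2
  simp_rw [hpointwise]
  rw [integral_add hcentered hnegPart, integral_sub_average, integral_const_mul, zero_add]

theorem mul_measureReal_le_integral_max_sub {c s : ℝ} (hf : Integrable f μ) (hsc : s ≤ c) :
    (c - s) * μ.real {x | f x ≤ s} ≤ ∫ x, max (c - f x) 0 ∂μ :=
  calc (c - s) * μ.real {x | f x ≤ s}
      ≤ (c - s) * μ.real {x | c - s ≤ max (c - f x) 0} := by
        refine mul_le_mul_of_nonneg_left (measureReal_mono ?_) (sub_nonneg.2 hsc)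
        exact fun x (hx : f x ≤ s) => le_max_of_le_left (by linarith : c - s ≤ c - f x)
    _ ≤ ∫ x, max (c - f x) 0 ∂μ :=
        mul_meas_ge_le_integral_of_nonneg (Filter.Eventually.of_forall fun _ => le_max_right _ _)
          ((integrable_const c).sub hf).pos_part _

theorem mul_sub_le_average_abs_sub_average [NeZero μ] {l s : ℝ} (hf : Integrable f μ)
    (hl : 0 ≤ l) (hmass : l * μ.real univ ≤ 2 * μ.real {x | f x ≤ s}) :
    l * (⨍ x, f x ∂μ - s) ≤ ⨍ x, |f x - ⨍ y, f y ∂μ| ∂μ := by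
  set A := ⨍ y, f y ∂μ
  rw [average_eq, smul_eq_mul, le_inv_mul_iff₀ measureReal_univ_pos]
  rcases le_or_gt A s with hAs | hsA
  · have : μ.real univ * (l * (A - s)) ≤ 0 :=
      mul_nonpos_of_nonneg_of_nonpos measureReal_nonneg
        (mul_nonpos_of_nonneg_of_nonpos hl (sub_nonpos.2 hAs))
    exact this.trans (integral_nonneg fun _ => abs_nonneg _)
  · calc μ.real univ * (l * (A - s)) = (A - s) * (l * μ.real univ) := by ring
      _ ≤ (A - s) * (2 * μ.real {x | f x ≤ s}) := by gcongr
      _ = 2 * ((A - s) * μ.real {x | f x ≤ s}) := by ring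
      _ ≤ 2 * ∫ x, max (A - f x) 0 ∂μ := by
        gcongr; exact mul_measureReal_le_integral_max_sub hf hsA.le
      _ = ∫ x, |f x - A| ∂μ := (integral_abs_sub_average hf).symm

theorem mul_measureReal_univ_le_of_measure_lt {l s : ℝ} (hl : l ≤ 2)
    (hμs : μ {x | s < f x} < ENNReal.ofReal (1 - l / 2) * μ univ) :
    l * μ.real univ ≤ 2 * μ.real {x | f x ≤ s} := by
  have hgt : μ.real {x | s < f x} < (1 - l / 2) * μ.real univ := by
    have := (ENNReal.toReal_lt_toReal (measure_ne_top _ _)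
      (ENNReal.mul_ne_top ENNReal.ofReal_ne_top (measure_ne_top _ _))).2 hμs
    rwa [ENNReal.toReal_mul, ENNReal.toReal_ofReal (by linarith)] at this
  have hcover : μ.real univ ≤ μ.real {x | f x ≤ s} + μ.real {x | s < f x} :=
    (measureReal_mono fun x _ => le_or_gt (f x) s).trans (measureReal_union_le _ _)
  linarith

theorem average_abs_sub_average_le_of_le_mul_average [NeZero μ] {ε l s : ℝ}
    (hf : Integrable f μ) (hε : 0 < ε) (hεl : ε < l)
    (hosc : ⨍ x, |f x - ⨍ y, f y ∂μ| ∂μ ≤ ε * ⨍ x, f x ∂μ)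
    (hmass : l * μ.real univ ≤ 2 * μ.real {x | f x ≤ s}) :
    ⨍ x, |f x - ⨍ y, f y ∂μ| ∂μ ≤ ε * l / (l - ε) * s := by
  have hlow := mul_sub_le_average_abs_sub_average hf (hε.trans hεl).le hmass
  have hA : ⨍ x, f x ∂μ ≤ l * s / (l - ε) := by
    rw [le_div_iff₀ (sub_pos.2 hεl)]; linarith
  calc ⨍ x, |f x - ⨍ y, f y ∂μ| ∂μ ≤ ε * ⨍ x, f x ∂μ := hosc
    _ ≤ ε * (l * s / (l - ε)) := by gcongr
    _ = ε * l / (l - ε) * s := by ring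

end MeasureTheory

theorem muAvg_eq_setAverage {n : ℕ} (μ : Measure (Fin n → ℝ)) (Q : Set (Fin n → ℝ))
    (f : (Fin n → ℝ) → ℝ) : muAvg μ Q f = ⨍ x in Q, f x ∂μ := by
  rw [muAvg, setAverage_eq, smul_eq_mul, measureReal_def, inv_mul_eq_div]

theorem muOsc_eq_setAverage {n : ℕ} (μ : Measure (Fin n → ℝ)) (Q : Set (Fin n → ℝ))
    (f : (Fin n → ℝ) → ℝ) :
    muOsc μ Q f = ⨍ x in Q, |f x - ⨍ y in Q, f y ∂μ| ∂μ := by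
  simp only [muOsc, muAvg, setAverage_eq, smul_eq_mul, measureReal_def, inv_mul_eq_div]

theorem stmt8_general {n : ℕ} (μ : Measure (Fin n → ℝ))
    (Q : Set (Fin n → ℝ)) (hQpos : 0 < μ Q) (hQfin : μ Q < ⊤)
    (f : (Fin n → ℝ) → ℝ) (hfint : IntegrableOn f Q μ)
    (ε : ℝ) (hε0 : 0 < ε)
    (hGR : muOsc μ Q f ≤ ε * muAvg μ Q f)
    (l : ℝ) (hl1 : ε < l) (hl2 : l < 2)
    (s : ℝ)
    (hμs : μ {x ∈ Q | f x > s} < ENNReal.ofReal (1 - l / 2) * μ Q) :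
    muOsc μ Q f ≤ ε * l / (l - ε) * s := by
  have : IsFiniteMeasure (μ.restrict Q) := isFiniteMeasure_restrict.2 hQfin.ne
  have : NeZero (μ.restrict Q) := ⟨by simpa [Measure.restrict_eq_zero] using hQpos.ne'⟩
  have hrestrict : μ.restrict Q {x | s < f x} ≤ μ {x ∈ Q | f x > s} := by
    rw [Measure.restrict_apply₀ (t := {x | s < f x})
      (hfint.aemeasurable.nullMeasurable measurableSet_Ioi)]
    exact measure_mono fun x hx => ⟨hx.2, hx.1⟩
  rw [muOsc_eq_setAverage, muAvg_eq_setAverage] at hGR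
  rw [muOsc_eq_setAverage]
  refine average_abs_sub_average_le_of_le_mul_average hfint hε0 hl1 hGR
    (mul_measureReal_univ_le_of_measure_lt hl2.le ?_)
  rw [Measure.restrict_apply_univ]
  exact hrestrict.trans_lt hμs

/-- Inequality (5) of Korenovskyy–Lerner–Stokolos: if `Ω_μ(f;Q) ≤ ε f_{Q,μ}` with
`0 < ε < 2`, `ε < λ < 2`, and `s ≥ 0` satisfies
`μ{x ∈ Q : f(x) > s} < (1 − λ/2) μ(Q)`, then `Ω_μ(f;Q) ≤ (ελ/(λ − ε)) s`. -/
theorem stmt8 {n : ℕ} (μ : Measure (Fin n → ℝ)) (hac : μ ≪ volume)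
    (Q : Set (Fin n → ℝ)) (hQ : IsCube Q) (hQpos : 0 < μ Q) (hQfin : μ Q < ⊤)
    (f : (Fin n → ℝ) → ℝ) (hf0 : ∀ x ∈ Q, 0 ≤ f x) (hfint : IntegrableOn f Q μ)
    (ε : ℝ) (hε0 : 0 < ε) (hε2 : ε < 2)
    (hGR : muOsc μ Q f ≤ ε * muAvg μ Q f)
    (l : ℝ) (hl1 : ε < l) (hl2 : l < 2)
    (s : ℝ) (hs : 0 ≤ s)
    (hμs : μ {x ∈ Q | f x > s} < ENNReal.ofReal (1 - l / 2) * μ Q) :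
    muOsc μ Q f ≤ ε * l / (l - ε) * s :=
  stmt8_general μ Q hQpos hQfin f hfint ε hε0 hGR l hl1 hl2 s hμs
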